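/- Under the model y^{(j)} = F(m ∘ (W c^{(j)})), j = 0,...,N_c-1, the stacked coefficient vector c = (c^{(0)},...,c^{(N_c-1)}) lies in the nullspace of the block matrix A_N whose (j,j)-block is -(Σ_{ℓ≠j} Y^{(ℓ)}) and whose (j,ℓ)-block for ℓ≠j is Y^{(j)}, where Y^{(j)} = (y^{(j)}_{(ν-r) mod Λ_N})_{ν∈Λ_N, r∈Λ_L}. In particular A_N has a nontrivial nullspace whenever c ≠ 0. -/

import Mathlib

open Complex Matrix BigOperators Finset

noncomputable def omegaN (N : ℕ) : ℂ := Complex.exp (-2 * Real.pi * Complex.I / N)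

/-- ω_N raised to an exponent given modulo N. -/
noncomputable def eN (N : ℕ) (x : ZMod N) : ℂ := omegaN N ^ x.val

/-- The centered 2D DFT matrix F = (ω_N^{ν·n}) indexed by (ZMod N)², which
realizes the index set Λ_N = {-N/2,…,N/2-1}² with periodic wrapping. -/
noncomputable def dft2 (N : ℕ) [NeZero N] :
    Matrix (ZMod N × ZMod N) (ZMod N × ZMod N) ℂ :=
  Matrix.of fun ν n => eN N (ν.1 * n.1 + ν.2 * n.2)

/-- Centering map identifying Fin L with {-n,…,n} ⊂ ZMod N (L = 2n+1). -/
def cenM (N L : ℕ) (i : Fin L) : ZMod N := ((i : ℕ) : ZMod N) - (((L - 1) / 2 : ℕ) : ZMod N)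

/-- (W a)_x = Σ_{r ∈ Λ_L} a_r ω_N^{-r·x}, the trigonometric-polynomial model map. -/
noncomputable def Wmap (N L : ℕ) (a : Fin L × Fin L → ℂ) (x : ZMod N × ZMod N) : ℂ :=
  ∑ r : Fin L × Fin L, a r * eN N (-(cenM N L r.1 * x.1 + cenM N L r.2 * x.2))

/-- The cyclic-shift (block Hankel) matrix Y⁽ʲ⁾ = (y_{(ν-r) mod Λ_N}). -/
noncomputable def Yshift (N L : ℕ) (y : ZMod N × ZMod N → ℂ) :
    Matrix (ZMod N × ZMod N) (Fin L × Fin L) ℂ :=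
  Matrix.of fun ν r => y (ν.1 - cenM N L r.1, ν.2 - cenM N L r.2)

/-- The MOCCA matrix A_N with (j,j)-block -(Σ_{ℓ≠j} Y⁽ˡ⁾) and (j,ℓ)-block Y⁽ʲ⁾ for ℓ≠j. -/
noncomputable def moccaA (N L Nc : ℕ) (y : Fin Nc → ZMod N × ZMod N → ℂ) :
    Matrix (Fin Nc × (ZMod N × ZMod N)) (Fin Nc × (Fin L × Fin L)) ℂ :=
  Matrix.of fun p q =>
    if q.1 = p.1 then -(∑ ℓ ∈ Finset.univ.erase p.1, Yshift N L (y ℓ) p.2 q.2)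
    else Yshift N L (y p.1) p.2 q.2

/-!
Multiplying the cyclic-shift matrix of a spectrum `F f` by a coefficient vector `b` is the
convolution theorem in disguise: `Y(F f) b = F (f · W b)`. Under the model this gives
`Y⁽ʲ⁾ c⁽ˡ⁾ = F (m · W c⁽ʲ⁾ · W c⁽ˡ⁾) = Y⁽ˡ⁾ c⁽ʲ⁾`, and the `j`-th block row of `A_N c` is
`∑_{ℓ ≠ j} (Y⁽ʲ⁾ c⁽ˡ⁾ - Y⁽ˡ⁾ c⁽ʲ⁾) = 0`.
-/

lemma omegaN_pow_self (N : ℕ) [NeZero N] : omegaN N ^ N = 1 := by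
  have hN : (N : ℂ) ≠ 0 := Nat.cast_ne_zero.mpr (NeZero.ne N)
  rw [omegaN, ← Complex.exp_nat_mul,
    show (N : ℂ) * (-2 * Real.pi * I / N) = -(2 * Real.pi * I) by field_simp,
    Complex.exp_neg, Complex.exp_two_pi_mul_I, inv_one]

lemma eN_natCast (N : ℕ) [NeZero N] (k : ℕ) : eN N k = omegaN N ^ k := by
  rw [eN, ZMod.val_natCast, ← pow_eq_pow_mod _ (omegaN_pow_self N)]

lemma eN_add (N : ℕ) [NeZero N] (a b : ZMod N) : eN N (a + b) = eN N a * eN N b := by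
  rw [← ZMod.natCast_zmod_val a, ← ZMod.natCast_zmod_val b, ← Nat.cast_add,
    eN_natCast, eN_natCast, eN_natCast, pow_add]

lemma Yshift_dft2_mulVec (N L : ℕ) [NeZero N] (f : ZMod N × ZMod N → ℂ)
    (b : Fin L × Fin L → ℂ) :
    Yshift N L (dft2 N *ᵥ f) *ᵥ b = dft2 N *ᵥ fun x => f x * Wmap N L b x := by
  funext ν
  simp only [mulVec, dotProduct, Yshift, dft2, Wmap, of_apply, sum_mul, mul_sum]
  rw [sum_comm]
  refine sum_congr rfl fun x _ => sum_congr rfl fun r _ => ?_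
  rw [show (ν.1 - cenM N L r.1) * x.1 + (ν.2 - cenM N L r.2) * x.2
      = (ν.1 * x.1 + ν.2 * x.2) + -(cenM N L r.1 * x.1 + cenM N L r.2 * x.2) by ring, eN_add]
  ring

lemma Yshift_model_mulVec_comm (N L : ℕ) [NeZero N] (m : ZMod N × ZMod N → ℂ)
    (a b : Fin L × Fin L → ℂ) :
    Yshift N L (dft2 N *ᵥ fun x => m x * Wmap N L a x) *ᵥ b
      = Yshift N L (dft2 N *ᵥ fun x => m x * Wmap N L b x) *ᵥ a := by
  simp only [Yshift_dft2_mulVec, mul_assoc, mul_comm (Wmap N L a _)]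

lemma moccaA_mulVec_apply (N L Nc : ℕ) (y : Fin Nc → ZMod N × ZMod N → ℂ)
    (v : Fin Nc × (Fin L × Fin L) → ℂ) (j : Fin Nc) (ν : ZMod N × ZMod N) :
    (moccaA N L Nc y *ᵥ v) (j, ν) = ∑ ℓ ∈ univ.erase j,
      ((Yshift N L (y j) *ᵥ fun r => v (ℓ, r)) ν - (Yshift N L (y ℓ) *ᵥ fun r => v (j, r)) ν) := by
  simp only [mulVec, dotProduct, moccaA, of_apply]
  rw [Fintype.sum_prod_type, ← sum_erase_add _ _ (mem_univ j), sum_sub_distrib, sub_eq_add_neg]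
  congr 1
  · exact sum_congr rfl fun ℓ hℓ => sum_congr rfl fun r _ => by rw [if_neg (ne_of_mem_erase hℓ)]
  · simp only [if_true, neg_mul, sum_neg_distrib, sum_mul]
    rw [sum_comm]

lemma moccaA_mulVec_eq_zero (N L Nc : ℕ) (y : Fin Nc → ZMod N × ZMod N → ℂ)
    (c : Fin Nc → Fin L × Fin L → ℂ)
    (hcomm : ∀ j ℓ, Yshift N L (y j) *ᵥ c ℓ = Yshift N L (y ℓ) *ᵥ c j) :
    moccaA N L Nc y *ᵥ (fun q => c q.1 q.2) = 0 := by
  funext ⟨j, ν⟩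
  rw [moccaA_mulVec_apply]
  exact sum_eq_zero fun ℓ _ => by rw [hcomm]; exact sub_self _

theorem stmt2_general (N L Nc : ℕ) [NeZero N]
    (m : ZMod N × ZMod N → ℂ) (c : Fin Nc → Fin L × Fin L → ℂ)
    (y : Fin Nc → ZMod N × ZMod N → ℂ)
    (hmodel : ∀ j, y j = (dft2 N).mulVec (fun x => m x * Wmap N L (c j) x)) :
    (moccaA N L Nc y).mulVec (fun q => c q.1 q.2) = 0 ∧
      ((fun q : Fin Nc × (Fin L × Fin L) => c q.1 q.2) ≠ 0 →
        ∃ v : Fin Nc × (Fin L × Fin L) → ℂ, v ≠ 0 ∧ (moccaA N L Nc y).mulVec v = 0) := by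
  have hnull := moccaA_mulVec_eq_zero N L Nc y c fun j ℓ => by
    rw [hmodel j, hmodel ℓ]
    exact Yshift_model_mulVec_comm N L m (c j) (c ℓ)
  exact ⟨hnull, fun hc => ⟨_, hc, hnull⟩⟩

/-- Under the model y⁽ʲ⁾ = F(m ∘ W c⁽ʲ⁾), the stacked coefficient vector c lies in the
nullspace of the MOCCA matrix A_N; in particular A_N has a nontrivial nullspace if c ≠ 0. -/
theorem stmt2 (N L n Nc : ℕ) [NeZero N] (hN : Even N) (hL : L = 2 * n + 1) (hLN : L < N)
    (m : ZMod N × ZMod N → ℂ) (c : Fin Nc → Fin L × Fin L → ℂ)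
    (y : Fin Nc → ZMod N × ZMod N → ℂ)
    (hmodel : ∀ j, y j = (dft2 N).mulVec (fun x => m x * Wmap N L (c j) x)) :
    (moccaA N L Nc y).mulVec (fun q => c q.1 q.2) = 0 ∧
      ((fun q : Fin Nc × (Fin L × Fin L) => c q.1 q.2) ≠ 0 →
        ∃ v : Fin Nc × (Fin L × Fin L) → ℂ, v ≠ 0 ∧ (moccaA N L Nc y).mulVec v = 0) :=
  stmt2_general N L Nc m c y hmodel
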